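/- Let n ≥ 1, let R : ℝ → Matrix (Fin n) (Fin n) ℝ be continuous with R(t) symmetric for every t, and let T > 0. Let U be a Lagrangian Jacobi solution along R with U(0) = 1 such that U(u) is invertible for every u ∈ [0, T], and let A be the Jacobi solution along R with A(0) = 0 and A'(0) = 1. Then A(t) = U(t) * ∫₀^{t} (U(u)ᵀ * U(u))⁻¹ du for every t ∈ [0, T]. -/

import Mathlib

open Matrix MeasureTheory

attribute [local instance] Matrix.normedAddCommGroup Matrix.normedSpace

/-- A Jacobi solution along `R`: a twice continuously differentiable matrix-valued
map `Y` satisfying `Y'' + R Y = 0`. -/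
def IsJacobi {n : ℕ} (R Y : ℝ → Matrix (Fin n) (Fin n) ℝ) : Prop :=
  ContDiff ℝ 2 Y ∧ ∀ t : ℝ, deriv (deriv Y) t + R t * Y t = 0

/-- A Lagrangian (self-conjugate) solution: the Wronskian `W(Y,Y)` vanishes. -/
def IsLagrangian {n : ℕ} (Y : ℝ → Matrix (Fin n) (Fin n) ℝ) : Prop :=
  ∀ t : ℝ, (deriv Y t)ᵀ * Y t = (Y t)ᵀ * deriv Y t

/-!
The Wronskian `W(Y, Z) = Yᵀ Z' - Y'ᵀ Z` of two Jacobi solutions along a symmetric `R` is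
constant, so `W(U, A) = W(U, A)(0) = 1`. Wherever `U` is invertible, differentiating
`A = U (U⁻¹ A)` and using that `U` is Lagrangian gives `Uᵀ U (U⁻¹ A)' = W(U, A) = 1`, that is
`(U⁻¹ A)' = (Uᵀ U)⁻¹`. Integrating from `0`, where `U⁻¹ A` vanishes, gives the formula.
-/

section MatrixCalculus

variable {𝕜 : Type*} [NontriviallyNormedField 𝕜] {l m p : Type*} {x : 𝕜}

theorem hasDerivAt_matrix_iff [Fintype p] {f : 𝕜 → Matrix m p 𝕜} {f' : Matrix m p 𝕜} :
    HasDerivAt f f' x ↔ ∀ i j, HasDerivAt (fun t => f t i j) (f' i j) x :=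
  hasDerivAt_pi.trans (forall_congr' fun _ => hasDerivAt_pi)

theorem differentiableAt_matrix_iff [Fintype p] {f : 𝕜 → Matrix m p 𝕜} :
    DifferentiableAt 𝕜 f x ↔ ∀ i j, DifferentiableAt 𝕜 (fun t => f t i j) x :=
  differentiableAt_pi.trans (forall_congr' fun _ => differentiableAt_pi)

theorem HasDerivAt.matrix_mul [Fintype m] [Fintype p] {f : 𝕜 → Matrix l m 𝕜}
    {g : 𝕜 → Matrix m p 𝕜} {f' : Matrix l m 𝕜} {g' : Matrix m p 𝕜}
    (hf : HasDerivAt f f' x) (hg : HasDerivAt g g' x) :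
    HasDerivAt (fun t => f t * g t) (f' * g x + f x * g') x := by
  rw [hasDerivAt_matrix_iff] at hf hg ⊢
  intro i j
  simpa only [mul_apply, Matrix.add_apply, Finset.sum_add_distrib] using
    HasDerivAt.fun_sum fun k (_ : k ∈ Finset.univ) => (hf i k).fun_mul (hg k j)

theorem HasDerivAt.matrix_transpose [Fintype m] [Fintype p] {f : 𝕜 → Matrix m p 𝕜}
    {f' : Matrix m p 𝕜} (hf : HasDerivAt f f' x) : HasDerivAt (fun t => (f t)ᵀ) f'ᵀ x :=
  hasDerivAt_matrix_iff.mpr fun i j => hasDerivAt_matrix_iff.mp hf j i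

variable [Fintype m] [DecidableEq m] {M : 𝕜 → Matrix m m 𝕜}

theorem DifferentiableAt.matrix_det (hM : DifferentiableAt 𝕜 M x) :
    DifferentiableAt 𝕜 (fun t => (M t).det) x := by
  simp only [det_apply']
  exact DifferentiableAt.fun_sum fun σ _ => (DifferentiableAt.fun_finsetProd fun i _ =>
    differentiableAt_matrix_iff.mp hM (σ i) i).const_mul _

theorem DifferentiableAt.matrix_adjugate (hM : DifferentiableAt 𝕜 M x) :
    DifferentiableAt 𝕜 (fun t => (M t).adjugate) x := by
  refine differentiableAt_matrix_iff.mpr fun i j => ?_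
  simp only [adjugate_apply]
  refine DifferentiableAt.matrix_det (differentiableAt_matrix_iff.mpr fun k l => ?_)
  by_cases hk : k = j
  · simp [updateRow_apply, hk]
  · simpa [updateRow_apply, hk] using differentiableAt_matrix_iff.mp hM k l

theorem DifferentiableAt.matrix_inv (hM : DifferentiableAt 𝕜 M x) (hx : IsUnit (M x).det) :
    DifferentiableAt 𝕜 (fun t => (M t)⁻¹) x := by
  simp only [inv_def, Ring.inverse_eq_inv']
  exact (hM.matrix_det.inv hx.ne_zero).smul hM.matrix_adjugate

end MatrixCalculus

section Wronskian

variable {m : Type*} [Fintype m] [DecidableEq m]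

theorem isUnit_det_transpose_mul_self {α : Type*} [CommRing α] {M : Matrix m m α}
    (h : IsUnit M.det) : IsUnit (Mᵀ * M).det := by
  rw [det_mul]
  exact (isUnit_det_transpose M h).mul h

noncomputable def wronskian (Y Z : ℝ → Matrix m m ℝ) (t : ℝ) : Matrix m m ℝ :=
  (Y t)ᵀ * deriv Z t - (deriv Y t)ᵀ * Z t

theorem hasDerivAt_inv_mul {U A : ℝ → Matrix m m ℝ} {x : ℝ}
    (hU : DifferentiableAt ℝ U x) (hA : DifferentiableAt ℝ A x) (hx : IsUnit (U x).det)
    (hL : (deriv U x)ᵀ * U x = (U x)ᵀ * deriv U x) :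
    HasDerivAt (fun t => (U t)⁻¹ * A t) (((U x)ᵀ * U x)⁻¹ * wronskian U A x) x := by
  set F := fun t => (U t)⁻¹ * A t
  have hF : DifferentiableAt ℝ F x :=
    ((hU.matrix_inv hx).hasDerivAt.matrix_mul hA.hasDerivAt).differentiableAt
  have hAF : A =ᶠ[nhds x] fun t => U t * F t := by
    filter_upwards [hU.matrix_det.continuousAt.eventually_ne hx.ne_zero] with t ht
    exact (mul_nonsing_inv_cancel_left _ _ ht.isUnit).symm
  have hA' : deriv A x = deriv U x * F x + U x * deriv F x :=
    ((hU.hasDerivAt.matrix_mul hF.hasDerivAt).congr_of_eventuallyEq hAF).deriv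
  have hW : (U x)ᵀ * U x * deriv F x = wronskian U A x :=
    calc (U x)ᵀ * U x * deriv F x = (U x)ᵀ * deriv A x - (U x)ᵀ * deriv U x * F x := by
          rw [hA']; noncomm_ring
      _ = wronskian U A x := by
          rw [← hL, mul_assoc, mul_nonsing_inv_cancel_left _ _ hx]; rfl
  rw [← hW, nonsing_inv_mul_cancel_left _ _ (isUnit_det_transpose_mul_self hx)]
  exact hF.hasDerivAt

end Wronskian

namespace IsJacobi

variable {n : ℕ} {R Y Z : ℝ → Matrix (Fin n) (Fin n) ℝ}

theorem differentiable (hY : IsJacobi R Y) : Differentiable ℝ Y :=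
  hY.1.differentiable two_ne_zero

theorem hasDerivAt (hY : IsJacobi R Y) (t : ℝ) : HasDerivAt Y (deriv Y t) t :=
  (hY.differentiable t).hasDerivAt

theorem hasDerivAt_deriv (hY : IsJacobi R Y) (t : ℝ) :
    HasDerivAt (deriv Y) (-(R t * Y t)) t :=
  (((hY.1.iterate_deriv' 1 1).differentiable one_ne_zero) t).hasDerivAt.congr_deriv
    (eq_neg_of_add_eq_zero_left (hY.2 t))

theorem hasDerivAt_wronskian (hY : IsJacobi R Y) (hZ : IsJacobi R Z)
    (hR : ∀ t, (R t)ᵀ = R t) (t : ℝ) : HasDerivAt (wronskian Y Z) 0 t := by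
  refine (((hY.hasDerivAt t).matrix_transpose.matrix_mul (hZ.hasDerivAt_deriv t)).sub
    ((hY.hasDerivAt_deriv t).matrix_transpose.matrix_mul (hZ.hasDerivAt t))).congr_deriv ?_
  rw [transpose_neg, transpose_mul, hR, mul_neg, neg_mul, Matrix.mul_assoc]
  abel

theorem wronskian_eq (hY : IsJacobi R Y) (hZ : IsJacobi R Z) (hR : ∀ t, (R t)ᵀ = R t)
    (s t : ℝ) : wronskian Y Z s = wronskian Y Z t :=
  is_const_of_deriv_eq_zero (fun u => (hY.hasDerivAt_wronskian hZ hR u).differentiableAt)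
    (fun u => (hY.hasDerivAt_wronskian hZ hR u).deriv) s t

end IsJacobi

theorem jacobi_A_eq_U_mul_integral_general {n : ℕ}
    (R : ℝ → Matrix (Fin n) (Fin n) ℝ)
    (hRsym : ∀ t : ℝ, (R t)ᵀ = R t)
    (T : ℝ)
    (U : ℝ → Matrix (Fin n) (Fin n) ℝ)
    (hU : IsJacobi R U) (hUL : IsLagrangian U) (hU0 : U 0 = 1)
    (hUinv : ∀ u ∈ Set.Icc (0 : ℝ) T, IsUnit (U u))
    (A : ℝ → Matrix (Fin n) (Fin n) ℝ)
    (hA : IsJacobi R A) (hA0 : A 0 = 0) (hA'0 : deriv A 0 = 1) :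
    ∀ t ∈ Set.Icc (0 : ℝ) T,
      A t = U t * ∫ u in (0 : ℝ)..t, ((U u)ᵀ * U u)⁻¹ := by
  intro t ht
  have hW : ∀ s, wronskian U A s = 1 := fun s => by
    rw [hU.wronskian_eq hA hRsym s 0]
    simp [wronskian, hU0, hA0, hA'0]
  have hunit : ∀ u ∈ Set.uIcc 0 t, IsUnit (U u).det := fun u hu =>
    (isUnit_iff_isUnit_det _).mp <| hUinv u <|
      Set.Icc_subset_Icc_right ht.2 (Set.uIcc_of_le ht.1 ▸ hu)
  have hderiv : ∀ u ∈ Set.uIcc 0 t,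
      HasDerivAt (fun s => (U s)⁻¹ * A s) ((U u)ᵀ * U u)⁻¹ u := fun u hu => by
    simpa [hW] using hasDerivAt_inv_mul (hU.differentiable u) (hA.differentiable u)
      (hunit u hu) (hUL u)
  have hcont : ContinuousOn (fun u => ((U u)ᵀ * U u)⁻¹) (Set.uIcc 0 t) := fun u hu =>
    (((hU.hasDerivAt u).matrix_transpose.matrix_mul (hU.hasDerivAt u)).differentiableAt.matrix_inv
      (isUnit_det_transpose_mul_self (hunit u hu))).continuousAt.continuousWithinAt
  rw [intervalIntegral.integral_eq_sub_of_hasDerivAt hderiv hcont.intervalIntegrable, hA0,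
    mul_zero, sub_zero, mul_nonsing_inv_cancel_left _ _ (hunit t Set.right_mem_uIcc)]

/-- `A(t) = U(t) ∫₀ᵗ (UᵀU)⁻¹(u) du` where `A(0) = 0`, `A'(0) = 1`, and `U` is a
nonsingular Lagrangian Jacobi solution with `U(0) = 1`. -/
theorem jacobi_A_eq_U_mul_integral {n : ℕ} (hn : 1 ≤ n)
    (R : ℝ → Matrix (Fin n) (Fin n) ℝ) (hRc : Continuous R)
    (hRsym : ∀ t : ℝ, (R t)ᵀ = R t)
    (T : ℝ) (hT : 0 < T)
    (U : ℝ → Matrix (Fin n) (Fin n) ℝ)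
    (hU : IsJacobi R U) (hUL : IsLagrangian U) (hU0 : U 0 = 1)
    (hUinv : ∀ u ∈ Set.Icc (0 : ℝ) T, IsUnit (U u))
    (A : ℝ → Matrix (Fin n) (Fin n) ℝ)
    (hA : IsJacobi R A) (hA0 : A 0 = 0) (hA'0 : deriv A 0 = 1) :
    ∀ t ∈ Set.Icc (0 : ℝ) T,
      A t = U t * ∫ u in (0 : ℝ)..t, ((U u)ᵀ * U u)⁻¹ :=
  jacobi_A_eq_U_mul_integral_general R hRsym T U hU hUL hU0 hUinv A hA hA0 hA'0
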